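/- arXiv:2312.15358 — 5 statements merged into one kernel-verified Lean document; each statement's English description precedes it below -/
import Mathlib

section
/- For any ball configuration η ∈ {0,1}^ℕ, any capacity ℓ ∈ ℕ and any site x ∈ ℕ, the carrier with capacity ℓ equals the sum of the first ℓ seat-occupation functions: W_ℓ(η,x) = Σ_{k=1}^{ℓ} 𝒲_k(η,x). -/
/-- Seat occupation functions 𝒲_k(η,x). -/
def seatW (η : ℕ → ℤ) : ℕ → ℕ → ℤ
  | 0, _ => 0
  | x + 1, k =>
      seatW η x k
        + η (x + 1) * (1 - seatW η x k) * (∏ m ∈ Finset.Ico 1 k, seatW η x m)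
        - (1 - η (x + 1)) * seatW η x k * (∏ m ∈ Finset.Ico 1 k, (1 - seatW η x m))

/-- Boarding indicator η↑_k(x). -/
def seatUp (η : ℕ → ℤ) (k x : ℕ) : ℤ :=
  η x * (1 - seatW η (x - 1) k) * (∏ m ∈ Finset.Ico 1 k, seatW η (x - 1) m)

/-- Alighting indicator η↓_k(x). -/
def seatDown (η : ℕ → ℤ) (k x : ℕ) : ℤ :=
  (1 - η x) * seatW η (x - 1) k * (∏ m ∈ Finset.Ico 1 k, (1 - seatW η (x - 1) m))

/-- Record indicator r(η,x). (Seat events at x have seat number ≤ x.) -/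
def recordInd (η : ℕ → ℤ) (x : ℕ) : ℤ :=
  1 - ∑ k ∈ Finset.Icc 1 x, (seatUp η k x + seatDown η k x)

/-- ξ_k(η,x). -/
def xiSeat (η : ℕ → ℤ) (k x : ℕ) : ℤ :=
  (x : ℤ) - ∑ y ∈ Finset.Icc 1 x, ∑ m ∈ Finset.Icc 1 k, (seatUp η m y + seatDown η m y)

/-- s_k(η,i). -/
noncomputable def sSeat (η : ℕ → ℤ) (k i : ℕ) : ℕ :=
  sInf {x : ℕ | xiSeat η k x = (i : ℤ)}

/-- k-skip map Ψ_k. -/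
noncomputable def skip (η : ℕ → ℤ) (k : ℕ) : ℕ → ℤ := fun x => η (sSeat η k x)

/-- Slot decomposition ζ_k(η,i). -/
noncomputable def zeta (η : ℕ → ℤ) (k i : ℕ) : ℤ :=
  ∑ y ∈ Finset.Icc (sSeat η k i + 1) (sSeat η k (i + 1)),
    (seatUp η k y - seatUp η (k + 1) y)

/-- Carrier with capacity ℓ. -/
def carrier (η : ℕ → ℤ) (ℓ : ℕ) : ℕ → ℤ
  | 0 => 0
  | x + 1 =>
      if η (x + 1) = 1 ∧ carrier η ℓ x < (ℓ : ℤ) then carrier η ℓ x + 1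
      else if η (x + 1) = 0 ∧ 0 < carrier η ℓ x then carrier η ℓ x - 1
      else carrier η ℓ x

/-- Carrier with infinite capacity. -/
def carrierInf (η : ℕ → ℤ) : ℕ → ℤ
  | 0 => 0
  | x + 1 => if η (x + 1) = 1 then carrierInf η x + 1 else max (carrierInf η x - 1) 0

/-- One-step BBS(ℓ) evolution. -/
def tEvol (η : ℕ → ℤ) (ℓ : ℕ) : ℕ → ℤ :=
  fun x => η x + carrier η ℓ (x - 1) - carrier η ℓ x

/-- One-step BBS(∞) evolution. -/
def tEvolInf (η : ℕ → ℤ) : ℕ → ℤ :=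
  fun x => η x + carrierInf η (x - 1) - carrierInf η x

/-! With the prefix products `P_k = ∏_{m<k} 𝒲_m` and `Q_k = ∏_{m<k} (1 - 𝒲_m)`, the update of
seat `k` is `-η (P_{k+1} - P_k) + (1 - η) (Q_{k+1} - Q_k)`, so summing over `k ≤ ℓ` telescopes:
the total gains `η (1 - P_{ℓ+1})` and loses `(1 - η) (1 - Q_{ℓ+1})`. When all seats are
0/1-valued, `P_{ℓ+1}` and `Q_{ℓ+1}` indicate that the first `ℓ` seats are all full, resp. all
empty, i.e. that the total equals `ℓ`, resp. `0`, which are exactly the boundary conditions of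
the carrier's update. -/

open Finset

theorem Finset.prod_eq_zero_or_one {ι M : Type*} [CommMonoidWithZero M] {s : Finset ι}
    {f : ι → M} (hf : ∀ i ∈ s, f i = 0 ∨ f i = 1) :
    ∏ i ∈ s, f i = 0 ∨ ∏ i ∈ s, f i = 1 :=
  prod_induction f (fun a => a = 0 ∨ a = 1)
    (by rintro a b (rfl | rfl) (rfl | rfl) <;> simp) (Or.inr rfl) hf

section ZeroOneValued

variable {ι R : Type*} [CommRing R] [LinearOrder R] [IsStrictOrderedRing R]
  {s : Finset ι} {f : ι → R}

theorem Finset.sum_eq_card_iff_of_zero_or_one (hf : ∀ i ∈ s, f i = 0 ∨ f i = 1) :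
    ∑ i ∈ s, f i = #s ↔ ∀ i ∈ s, f i = 1 := by
  rw [show (#s : R) = ∑ _i ∈ s, 1 by simp]
  exact sum_eq_sum_iff_of_le fun i hi => by rcases hf i hi with h | h <;> simp [h]

theorem Finset.prod_eq_ite_of_zero_or_one (hf : ∀ i ∈ s, f i = 0 ∨ f i = 1) :
    ∏ i ∈ s, f i = if ∑ i ∈ s, f i = #s then 1 else 0 := by
  by_cases h : ∀ i ∈ s, f i = 1
  · rw [if_pos ((sum_eq_card_iff_of_zero_or_one hf).2 h), prod_eq_one h]
  · rw [if_neg (mt (sum_eq_card_iff_of_zero_or_one hf).1 h)]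
    push Not at h
    obtain ⟨i, hi, hne⟩ := h
    exact prod_eq_zero hi ((hf i hi).resolve_right hne)

theorem Finset.prod_one_sub_eq_ite_of_zero_or_one (hf : ∀ i ∈ s, f i = 0 ∨ f i = 1) :
    ∏ i ∈ s, (1 - f i) = if ∑ i ∈ s, f i = 0 then 1 else 0 := by
  have hg : ∀ i ∈ s, 1 - f i = 0 ∨ 1 - f i = 1 := fun i hi => by
    rcases hf i hi with h | h <;> simp [h]
  simp only [prod_eq_ite_of_zero_or_one hg, sum_sub_distrib, sum_const, nsmul_one, sub_eq_self]

theorem Finset.sum_nonneg_and_le_card_of_zero_or_one (hf : ∀ i ∈ s, f i = 0 ∨ f i = 1) :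
    0 ≤ ∑ i ∈ s, f i ∧ ∑ i ∈ s, f i ≤ #s := by
  have h01 : ∀ i ∈ s, 0 ≤ f i ∧ f i ≤ 1 := fun i hi => by
    rcases hf i hi with h | h <;> simp [h]
  refine ⟨sum_nonneg fun i hi => (h01 i hi).1, ?_⟩
  simpa using sum_le_card_nsmul s f 1 fun i hi => (h01 i hi).2

end ZeroOneValued

theorem seatW_eq_zero_or_one {η : ℕ → ℤ} (hη : ∀ x, η x = 0 ∨ η x = 1) (x k : ℕ) :
    seatW η x k = 0 ∨ seatW η x k = 1 := by
  induction x generalizing k with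
  | zero => exact Or.inl rfl
  | succ x ih =>
    have hP := prod_eq_zero_or_one fun m (_ : m ∈ Ico 1 k) => ih m
    have hQ : ∏ m ∈ Ico 1 k, (1 - seatW η x m) = 0 ∨ ∏ m ∈ Ico 1 k, (1 - seatW η x m) = 1 :=
      prod_eq_zero_or_one fun m _ => by rcases ih m with h | h <;> simp [h]
    rcases hη (x + 1) with he | he <;> rcases ih k with hw | hw <;>
      rcases hP with hp | hp <;> rcases hQ with hq | hq <;> simp [seatW, he, hw, hp, hq]

theorem sum_seatW_succ (η : ℕ → ℤ) (ℓ x : ℕ) :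
    ∑ k ∈ Icc 1 ℓ, seatW η (x + 1) k
      = ∑ k ∈ Icc 1 ℓ, seatW η x k
        + η (x + 1) * (1 - ∏ m ∈ Icc 1 ℓ, seatW η x m)
        - (1 - η (x + 1)) * (1 - ∏ m ∈ Icc 1 ℓ, (1 - seatW η x m)) := by
  set P : ℕ → ℤ := fun k => ∏ m ∈ Ico 1 k, seatW η x m
  set Q : ℕ → ℤ := fun k => ∏ m ∈ Ico 1 k, (1 - seatW η x m)
  have hstep : ∀ k ∈ Ico 1 (ℓ + 1), seatW η (x + 1) k
      = seatW η x k - η (x + 1) * (P (k + 1) - P k) + (1 - η (x + 1)) * (Q (k + 1) - Q k) := by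
    intro k hk
    simp only [P, Q, prod_Ico_succ_top (mem_Ico.1 hk).1]
    rw [seatW]
    ring
  rw [← Ico_add_one_right_eq_Icc, sum_congr rfl hstep, sum_add_distrib, sum_sub_distrib,
    ← mul_sum, ← mul_sum, sum_Ico_sub P (by omega), sum_Ico_sub Q (by omega)]
  simp only [P, Q, Ico_self, prod_empty]
  ring

def carrierStep (ℓ : ℕ) (e c : ℤ) : ℤ :=
  if e = 1 ∧ c < ℓ then c + 1 else if e = 0 ∧ 0 < c then c - 1 else c

theorem carrier_succ (η : ℕ → ℤ) (ℓ x : ℕ) :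
    carrier η ℓ (x + 1) = carrierStep ℓ (η (x + 1)) (carrier η ℓ x) :=
  rfl

theorem sum_seatW_succ_eq_carrierStep {η : ℕ → ℤ} (hη : ∀ x, η x = 0 ∨ η x = 1) (ℓ x : ℕ) :
    ∑ k ∈ Icc 1 ℓ, seatW η (x + 1) k
      = carrierStep ℓ (η (x + 1)) (∑ k ∈ Icc 1 ℓ, seatW η x k) := by
  have h01 : ∀ k ∈ Icc 1 ℓ, seatW η x k = 0 ∨ seatW η x k = 1 :=
    fun k _ => seatW_eq_zero_or_one hη x k
  obtain ⟨hS₀, hSℓ⟩ := sum_nonneg_and_le_card_of_zero_or_one h01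
  rw [sum_seatW_succ, prod_eq_ite_of_zero_or_one h01, prod_one_sub_eq_ite_of_zero_or_one h01]
  simp only [Nat.card_Icc, add_tsub_cancel_right] at hSℓ ⊢
  unfold carrierStep
  rcases hη (x + 1) with he | he <;> rw [he] <;> split_ifs <;> omega

theorem carrier_eq_sum_seatW_general (η : ℕ → ℤ) (hη : ∀ x, η x = 0 ∨ η x = 1)
    (ℓ : ℕ) (x : ℕ) :
    carrier η ℓ x = ∑ k ∈ Finset.Icc 1 ℓ, seatW η x k := by
  induction x with
  | zero => simp [carrier, seatW]
  | succ x ih => rw [carrier_succ, sum_seatW_succ_eq_carrierStep hη, ih]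

/-- W_ℓ(η,x) = Σ_{k=1}^ℓ 𝒲_k(η,x). -/
theorem carrier_eq_sum_seatW (η : ℕ → ℤ) (hη : ∀ x, η x = 0 ∨ η x = 1)
    (ℓ : ℕ) (hℓ : 1 ≤ ℓ) (x : ℕ) :
    carrier η ℓ x = ∑ k ∈ Finset.Icc 1 ℓ, seatW η x k :=
  carrier_eq_sum_seatW_general η hη ℓ x
end

section
/- Let η ∈ {0,1}^ℕ. For any k ∈ ℕ and x ∈ ℕ: (1) if η↑_k(x)=1 then Σ_{y=1}^{x}(η↑_ℓ(y) − η↓_ℓ(y)) = 1 for every 1 ≤ ℓ ≤ k; (2) if η↓_k(x)=1 then Σ_{y=1}^{x}(η↑_ℓ(y) − η↓_ℓ(y)) = 0 for every 1 ≤ ℓ ≤ k; (3) if r(η,x)=1 then Σ_{y=1}^{x}(η↑_ℓ(y) − η↓_ℓ(y)) = 0 for every ℓ ∈ ℕ. -/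
section Aux

variable {η : ℕ → ℤ} (hη : ∀ x, η x = 0 ∨ η x = 1)

lemma prod01 {s : Finset ℕ} {f : ℕ → ℤ} (h : ∀ m ∈ s, f m = 0 ∨ f m = 1) :
    (∏ m ∈ s, f m) = 0 ∨ (∏ m ∈ s, f m) = 1 := by
  refine Finset.prod_induction f (fun z => z = 0 ∨ z = 1) ?_ (Or.inr rfl) h
  rintro a b (ha | ha) (hb | hb) <;> simp [ha, hb]

include hη in
lemma seatW_val (x : ℕ) : ∀ k, seatW η x k = 0 ∨ seatW η x k = 1 := by
  induction x with
  | zero => intro k; left; rfl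
  | succ x IH =>
    intro k
    have hP := prod01 (s := Finset.Ico 1 k) (f := fun m => seatW η x m) (fun m _ => IH m)
    have hQ := prod01 (s := Finset.Ico 1 k) (f := fun m => 1 - seatW η x m) (fun m _ => by rcases IH m with h | h <;> simp [h])
    rcases hη (x + 1) with h | h <;> rcases IH k with hW | hW <;>
      rcases hP with hP | hP <;> rcases hQ with hQ | hQ <;>
      simp [seatW, h, hW, hP, hQ]

include hη in
lemma seatW_zero_of_lt (x : ℕ) : ∀ k, x < k → seatW η x k = 0 := by
  induction x with
  | zero => intro k _; rfl
  | succ x IH =>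
    intro k hk
    have hW : seatW η x k = 0 := IH k (by omega)
    have hP : (∏ m ∈ Finset.Ico 1 k, seatW η x m) = 0 := by
      refine Finset.prod_eq_zero (i := x + 1) (by simp; omega) (IH (x + 1) (by omega))
    simp [seatW, hW, hP]

lemma sum_updown (ℓ : ℕ) (x : ℕ) :
    ∑ y ∈ Finset.Icc 1 x, (seatUp η ℓ y - seatDown η ℓ y) = seatW η x ℓ := by
  induction x with
  | zero => simp [seatW]
  | succ x IH =>
    rw [Finset.sum_Icc_succ_top (by omega : 1 ≤ x + 1), IH]
    simp only [seatUp, seatDown, Nat.add_sub_cancel]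
    show _ = seatW η (x + 1) ℓ
    simp only [seatW]; ring

include hη in
lemma seatUp_val (k x : ℕ) : seatUp η k x = 0 ∨ seatUp η k x = 1 := by
  have hP := prod01 (s := Finset.Ico 1 k) (f := fun m => seatW η (x - 1) m) (fun m _ => seatW_val hη _ m)
  rcases hη x with h | h <;> rcases seatW_val hη (x - 1) k with hW | hW <;>
    rcases hP with hP | hP <;> simp [seatUp, h, hW, hP]

include hη in
lemma seatDown_val (k x : ℕ) : seatDown η k x = 0 ∨ seatDown η k x = 1 := by
  have hQ := prod01 (s := Finset.Ico 1 k) (f := fun m => 1 - seatW η (x - 1) m)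
    (fun m _ => by rcases seatW_val hη (x - 1) m with h | h <;> simp [h])
  rcases hη x with h | h <;> rcases seatW_val hη (x - 1) k with hW | hW <;>
    rcases hQ with hQ | hQ <;> simp [seatDown, h, hW, hQ]

end Aux

/-- basic properties of the seat number configuration (Lemma 3.1 of [MSSS]). -/
theorem seat_basic_properties (η : ℕ → ℤ) (hη : ∀ x, η x = 0 ∨ η x = 1)
    (k : ℕ) (hk : 1 ≤ k) (x : ℕ) (hx : 1 ≤ x) :
    (seatUp η k x = 1 → ∀ ℓ, 1 ≤ ℓ → ℓ ≤ k →
      ∑ y ∈ Finset.Icc 1 x, (seatUp η ℓ y - seatDown η ℓ y) = 1) ∧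
    (seatDown η k x = 1 → ∀ ℓ, 1 ≤ ℓ → ℓ ≤ k →
      ∑ y ∈ Finset.Icc 1 x, (seatUp η ℓ y - seatDown η ℓ y) = 0) ∧
    (recordInd η x = 1 → ∀ ℓ, 1 ≤ ℓ →
      ∑ y ∈ Finset.Icc 1 x, (seatUp η ℓ y - seatDown η ℓ y) = 0) := by
  obtain ⟨n, rfl⟩ : ∃ n, x = n + 1 := ⟨x - 1, by omega⟩
  refine ⟨?_, ?_, ?_⟩
  · -- boarding case
    intro h ℓ hℓ1 hℓk
    rw [sum_updown]
    have hP := prod01 (s := Finset.Ico 1 k) (f := fun m => seatW η n m)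
      (fun m _ => seatW_val hη n m)
    rcases hη (n + 1) with hA | hA <;> rcases seatW_val hη n k with hB | hB <;>
      rcases hP with hP | hP <;>
      simp [seatUp, hA, hB, hP] at h
    -- now hA : η (n+1) = 1, hB : seatW η n k = 0, hP : ∏ = 1
    have hall : ∀ m, 1 ≤ m → m < k → seatW η n m = 1 := by
      intro m h1 h2
      rcases seatW_val hη n m with hz | hz
      · exfalso
        rw [Finset.prod_eq_zero (i := m) (by simp; omega) hz] at hP
        norm_num at hP
      · exact hz
    rcases eq_or_lt_of_le hℓk with rfl | hlt
    · show seatW η (n + 1) ℓ = 1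
      simp [seatW, hA, hB, hP]
    · have hWℓ : seatW η n ℓ = 1 := hall ℓ hℓ1 hlt
      show seatW η (n + 1) ℓ = 1
      simp [seatW, hA, hWℓ]
  · -- alighting case
    intro h ℓ hℓ1 hℓk
    rw [sum_updown]
    have hQ := prod01 (s := Finset.Ico 1 k) (f := fun m => 1 - seatW η n m)
      (fun m _ => by rcases seatW_val hη n m with hz | hz <;> simp [hz])
    rcases hη (n + 1) with hA | hA <;> rcases seatW_val hη n k with hB | hB <;>
      rcases hQ with hQ | hQ <;>
      simp [seatDown, hA, hB, hQ] at h
    -- now hA : η (n+1) = 0, hB : seatW η n k = 1, hQ : ∏ (1 - W) = 1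
    have hall : ∀ m, 1 ≤ m → m < k → seatW η n m = 0 := by
      intro m h1 h2
      rcases seatW_val hη n m with hz | hz
      · exact hz
      · exfalso
        rw [Finset.prod_eq_zero (i := m) (by simp; omega) (by simp [hz])] at hQ
        norm_num at hQ
    rcases eq_or_lt_of_le hℓk with rfl | hlt
    · show seatW η (n + 1) ℓ = 0
      simp [seatW, hA, hB, hQ]
    · have hWℓ : seatW η n ℓ = 0 := hall ℓ hℓ1 hlt
      show seatW η (n + 1) ℓ = 0
      simp [seatW, hA, hWℓ]
  · -- record case
    intro h ℓ hℓ1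
    rw [sum_updown]
    have hS : ∑ m ∈ Finset.Icc 1 (n + 1), (seatUp η m (n + 1) + seatDown η m (n + 1)) = 0 := by
      have := h; unfold recordInd at this; linarith
    have hzero : ∀ m ∈ Finset.Icc 1 (n + 1),
        seatUp η m (n + 1) = 0 ∧ seatDown η m (n + 1) = 0 := by
      intro m hm
      have hterm := (Finset.sum_eq_zero_iff_of_nonneg (fun m _ => by
        rcases seatUp_val hη m (n + 1) with h1 | h1 <;>
          rcases seatDown_val hη m (n + 1) with h2 | h2 <;> simp [h1, h2])).mp hS m hm
      rcases seatUp_val hη m (n + 1) with h1 | h1 <;>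
        rcases seatDown_val hη m (n + 1) with h2 | h2 <;>
        simp [h1, h2] at hterm ⊢
    -- Step 1: η (n+1) = 0
    have hA : η (n + 1) = 0 := by
      rcases hη (n + 1) with hA | hA
      · exact hA
      exfalso
      have hex : ∃ j, 1 ≤ j ∧ seatW η n j = 0 :=
        ⟨n + 1, by omega, seatW_zero_of_lt hη n (n + 1) (by omega)⟩
      classical
      set j := Nat.find hex with hj
      obtain ⟨hj1, hjW⟩ := Nat.find_spec hex
      have hjle : j ≤ n + 1 := Nat.find_min' hex ⟨by omega, seatW_zero_of_lt hη n (n + 1) (by omega)⟩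
      have hPj : (∏ m ∈ Finset.Ico 1 j, seatW η n m) = 1 := by
        refine Finset.prod_eq_one ?_
        intro m hm
        simp only [Finset.mem_Ico] at hm
        rcases seatW_val hη n m with hz | hz
        · exact absurd ⟨hm.1, hz⟩ (Nat.find_min hex hm.2)
        · exact hz
      have := (hzero j (by simp; omega)).1
      rw [seatUp, Nat.add_sub_cancel, hA, hjW, hPj] at this
      norm_num at this
    -- Step 2: all seats empty at time n
    have hall : ∀ m, 1 ≤ m → seatW η n m = 0 := by
      intro m
      induction m using Nat.strong_induction_on with
      | _ m IH =>
        intro h1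
        rcases seatW_val hη n m with hz | hz
        · exact hz
        exfalso
        have hmle : m ≤ n := by
          by_contra hc
          rw [seatW_zero_of_lt hη n m (by omega)] at hz
          norm_num at hz
        have hQm : (∏ i ∈ Finset.Ico 1 m, (1 - seatW η n i)) = 1 := by
          refine Finset.prod_eq_one ?_
          intro i hi
          simp only [Finset.mem_Ico] at hi
          rw [IH i hi.2 hi.1]; ring
        have := (hzero m (by simp; omega)).2
        rw [seatDown, Nat.add_sub_cancel, hA, hz, hQm] at this
        norm_num at this
    show seatW η (n + 1) ℓ = 0
    simp [seatW, hA, hall ℓ hℓ1]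
end

section
/- Let η ∈ {0,1}^ℕ. For any k, ℓ ∈ ℕ, σ ∈ {↑,↓} and 0 ≤ z ≤ w, the seats of number k+ℓ visited along the k-skipped positions exhaust all (k+ℓ,σ)-seats in the corresponding interval: Σ_{y=z}^{w} η^σ_{k+ℓ}(s_k(η,y)) = Σ_{y=s_k(η,z)}^{s_k(η,w)} η^σ_{k+ℓ}(y). In particular, Σ_{y=s_k(η,z)+1}^{s_k(η,z+1)-1} η^σ_{k+ℓ}(y) = 0. -/
section aux
variable {η : ℕ → ℤ} (hη : ∀ x, η x = 0 ∨ η x = 1)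

include hη in
lemma seatW01 : ∀ x k, seatW η x k = 0 ∨ seatW η x k = 1 := by
  intro x
  induction x with
  | zero => intro k; left; rfl
  | succ x ih =>
    intro k
    have hP := prod01 (s := Finset.Ico 1 k) (f := fun m => seatW η x m) (fun m _ => ih m)
    have hQ := prod01 (s := Finset.Ico 1 k) (f := fun m => 1 - seatW η x m)
      (fun m _ => by rcases ih m with h | h <;> simp [h])
    rcases hη (x + 1) with h | h <;> rcases ih k with hk | hk <;>
      rcases hP with hp | hp <;> rcases hQ with hq | hq <;>
      simp only [seatW, h, hk, hp, hq] <;> ring_nf <;> simp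

include hη in
lemma seatUp01 (m y : ℕ) : seatUp η m y = 0 ∨ seatUp η m y = 1 := by
  have hP := prod01 (s := Finset.Ico 1 m) (f := fun j => seatW η (y-1) j)
    (fun j _ => seatW01 hη (y-1) j)
  rcases hη y with h | h <;> rcases seatW01 hη (y-1) m with hk | hk <;>
    rcases hP with hp | hp <;> simp [seatUp, h, hk, hp]

include hη in
lemma seatDown01 (m y : ℕ) : seatDown η m y = 0 ∨ seatDown η m y = 1 := by
  have hQ := prod01 (s := Finset.Ico 1 m) (f := fun j => 1 - seatW η (y-1) j)
    (fun j _ => by rcases seatW01 hη (y-1) j with h | h <;> simp [h])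
  rcases hη y with h | h <;> rcases seatW01 hη (y-1) m with hk | hk <;>
    rcases hQ with hp | hp <;> simp [seatDown, h, hk, hp]

include hη in
lemma updown01 (m y : ℕ) :
    seatUp η m y + seatDown η m y = 0 ∨ seatUp η m y + seatDown η m y = 1 := by
  rcases hη y with h | h
  · have : seatUp η m y = 0 := by simp [seatUp, h]
    rw [this, zero_add]; exact seatDown01 hη m y
  · have : seatDown η m y = 0 := by simp [seatDown, h]
    rw [this, add_zero]; exact seatUp01 hη m y

-- excl
include hη in
lemma excl {m m' y : ℕ} (h1 : 1 ≤ m) (hmm : m < m')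
    (h : seatUp η m y + seatDown η m y = 1) :
    seatUp η m' y = 0 ∧ seatDown η m' y = 0 := by
  have hmem : m ∈ Finset.Ico 1 m' := Finset.mem_Ico.mpr ⟨h1, hmm⟩
  rcases hη y with h0 | h0
  · -- η y = 0 : up m = 0, so down m = 1, so W_m = 1
    have hu : seatUp η m y = 0 := by simp [seatUp, h0]
    rw [hu, zero_add] at h
    have hW : seatW η (y-1) m = 1 := by
      rcases seatW01 hη (y-1) m with hw | hw
      · exfalso; rw [seatDown] at h; rw [hw] at h; simp at h
      · exact hw
    refine ⟨by simp [seatUp, h0], ?_⟩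
    rw [seatDown]
    rw [Finset.prod_eq_zero hmem (by rw [hW]; ring)]
    ring
  · -- η y = 1 : down m = 0, up m = 1, so W_m = 0
    have hd : seatDown η m y = 0 := by simp [seatDown, h0]
    rw [hd, add_zero] at h
    have hW : seatW η (y-1) m = 0 := by
      rcases seatW01 hη (y-1) m with hw | hw
      · exact hw
      · exfalso; rw [seatUp] at h; rw [hw] at h; simp at h
    refine ⟨?_, by simp [seatDown, h0]⟩
    rw [seatUp]
    rw [Finset.prod_eq_zero hmem hW]
    ring

/-- total event indicator -/
def Tev (η : ℕ → ℤ) (k y : ℕ) : ℤ :=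
  ∑ m ∈ Finset.Icc 1 k, (seatUp η m y + seatDown η m y)

include hη in
lemma Tev01 (k y : ℕ) : Tev η k y = 0 ∨ Tev η k y = 1 := by
  by_cases hall : ∀ m ∈ Finset.Icc 1 k, seatUp η m y + seatDown η m y = 0
  · left; exact Finset.sum_eq_zero hall
  · right
    push_neg at hall
    obtain ⟨m0, hm0, hne⟩ := hall
    have h1 : seatUp η m0 y + seatDown η m0 y = 1 :=
      (updown01 hη m0 y).resolve_left hne
    rw [Tev, Finset.sum_eq_single m0]
    · exact h1
    · intro m hm hmne
      rcases lt_or_gt_of_ne hmne with hlt | hgt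
      · by_contra hne2
        have h2 : seatUp η m y + seatDown η m y = 1 := (updown01 hη m y).resolve_left hne2
        have := excl hη (Finset.mem_Icc.mp hm).1 hlt h2
        rw [this.1, this.2] at h1; simp at h1
      · have := excl hη (Finset.mem_Icc.mp hm0).1 hgt h1
        rw [this.1, this.2]; ring
    · intro h; exact absurd hm0 h

-- key
include hη in
lemma key {k ℓ y : ℕ} (hℓ : 1 ≤ ℓ) (hT : Tev η k y = 1) :
    seatUp η (k + ℓ) y = 0 ∧ seatDown η (k + ℓ) y = 0 := by
  have hne : ¬ ∀ m ∈ Finset.Icc 1 k, seatUp η m y + seatDown η m y = 0 := by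
    intro hall; rw [Tev, Finset.sum_eq_zero hall] at hT; simp at hT
  push_neg at hne
  obtain ⟨m0, hm0, hne0⟩ := hne
  have h1 : seatUp η m0 y + seatDown η m0 y = 1 := (updown01 hη m0 y).resolve_left hne0
  have hm0k := Finset.mem_Icc.mp hm0
  exact excl hη hm0k.1 (lt_of_le_of_lt hm0k.2 (by omega)) h1

lemma xi_zero (k : ℕ) : xiSeat η k 0 = 0 := by simp [xiSeat]

lemma xi_succ (k x : ℕ) : xiSeat η k (x + 1) = xiSeat η k x + 1 - Tev η k (x + 1) := by
  rw [xiSeat, xiSeat, Tev, Finset.sum_Icc_succ_top (by omega)]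
  push_cast; ring

include hη in
lemma xi_mono (k : ℕ) : Monotone (xiSeat η k) := by
  apply monotone_nat_of_le_succ
  intro x
  rw [xi_succ]
  rcases Tev01 hη k (x+1) with h | h <;> rw [h] <;> omega

include hη in
lemma xi_step (k x : ℕ) : xiSeat η k (x + 1) ≤ xiSeat η k x + 1 := by
  rw [xi_succ]
  rcases Tev01 hη k (x+1) with h | h <;> rw [h] <;> omega

end aux

section sprops
variable {η : ℕ → ℤ} (hη : ∀ x, η x = 0 ∨ η x = 1) {k : ℕ}

lemma xi_sSeat (hfin : ∀ i : ℕ, ∃ x, xiSeat η k x = (i : ℤ)) (i : ℕ) :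
    xiSeat η k (sSeat η k i) = (i : ℤ) :=
  Nat.sInf_mem (hfin i)

lemma sSeat_le {i x : ℕ} (h : xiSeat η k x = (i : ℤ)) : sSeat η k i ≤ x :=
  Nat.sInf_le h

include hη in
lemma xi_lt_or_s_le (i : ℕ) : ∀ y, xiSeat η k y < (i : ℤ) ∨ sSeat η k i ≤ y := by
  intro y
  induction y with
  | zero =>
    rcases Nat.eq_zero_or_pos i with hi | hi
    · right; subst hi; exact sSeat_le (xi_zero k)
    · left; rw [xi_zero]; exact_mod_cast hi
  | succ y ih =>
    rcases ih with h | h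
    · by_cases he : xiSeat η k (y + 1) = (i : ℤ)
      · right; exact sSeat_le he
      · left
        have := xi_step hη k y
        omega
    · right; omega

include hη in
lemma sSeat_strictMono (hfin : ∀ i : ℕ, ∃ x, xiSeat η k x = (i : ℤ)) :
    StrictMono (sSeat η k) := by
  intro i j hij
  by_contra hle
  push_neg at hle
  have := xi_mono hη k hle
  rw [xi_sSeat hfin, xi_sSeat hfin] at this
  exact absurd (by exact_mod_cast this) (by omega)

-- a position in [s z, s w] not of the form s j has a (≤ k)-event
include hη in
lemma event_of_not_image (hfin : ∀ i : ℕ, ∃ x, xiSeat η k x = (i : ℤ))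
    {z w y : ℕ} (hzy : sSeat η k z ≤ y) (hyw : y ≤ sSeat η k w)
    (hnot : ∀ j, z ≤ j → j ≤ w → y ≠ sSeat η k j) : Tev η k y = 1 := by
  have hz : (z : ℤ) ≤ xiSeat η k y := by
    have := xi_mono hη k hzy; rwa [xi_sSeat hfin] at this
  have hw : xiSeat η k y ≤ (w : ℤ) := by
    have := xi_mono hη k hyw; rwa [xi_sSeat hfin] at this
  set j := (xiSeat η k y).toNat with hj
  have hxy : xiSeat η k y = (j : ℤ) := by rw [hj]; omega
  have hzj : z ≤ j := by omega
  have hjw : j ≤ w := by omega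
  have hsj : sSeat η k j ≤ y := sSeat_le hxy
  have hne : y ≠ sSeat η k j := hnot j hzj hjw
  have hy1 : sSeat η k j ≤ y - 1 := by omega
  have hy0 : 1 ≤ y := by omega
  have h1 : (j : ℤ) ≤ xiSeat η k (y - 1) := by
    have := xi_mono hη k hy1; rwa [xi_sSeat hfin] at this
  have h2 : xiSeat η k (y - 1) ≤ xiSeat η k y := xi_mono hη k (by omega)
  have heq : xiSeat η k (y - 1) = xiSeat η k y := by omega
  have hstep := xi_succ (η := η) k (y - 1)
  rw [Nat.sub_add_cancel hy0] at hstep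
  rw [heq] at hstep
  omega

end sprops


/-- sums of (k+ℓ,σ)-seat indicators along k-skipped positions (Lemma sums). -/
theorem sum_seat_skip (η : ℕ → ℤ) (hη : ∀ x, η x = 0 ∨ η x = 1)
    (k ℓ : ℕ) (hk : 1 ≤ k) (hℓ : 1 ≤ ℓ)
    (hfin : ∀ i : ℕ, ∃ x, xiSeat η k x = (i : ℤ))
    (z w : ℕ) (hzw : z ≤ w) :
    (∑ y ∈ Finset.Icc z w, seatUp η (k + ℓ) (sSeat η k y)
        = ∑ y ∈ Finset.Icc (sSeat η k z) (sSeat η k w), seatUp η (k + ℓ) y) ∧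
    (∑ y ∈ Finset.Icc z w, seatDown η (k + ℓ) (sSeat η k y)
        = ∑ y ∈ Finset.Icc (sSeat η k z) (sSeat η k w), seatDown η (k + ℓ) y) ∧
    (∑ y ∈ Finset.Icc (sSeat η k z + 1) (sSeat η k (z + 1) - 1), seatUp η (k + ℓ) y = 0) ∧
    (∑ y ∈ Finset.Icc (sSeat η k z + 1) (sSeat η k (z + 1) - 1), seatDown η (k + ℓ) y = 0) := by
  have hmono := sSeat_strictMono hη hfin
  have main : ∀ f : ℕ → ℤ, (∀ y, Tev η k y = 1 → f y = 0) →
      ∑ y ∈ Finset.Icc z w, f (sSeat η k y)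
        = ∑ y ∈ Finset.Icc (sSeat η k z) (sSeat η k w), f y := by
    intro f hf
    have hinj : ∀ a ∈ Finset.Icc z w, ∀ b ∈ Finset.Icc z w,
        sSeat η k a = sSeat η k b → a = b := fun a _ b _ hab => hmono.injective hab
    refine (Finset.sum_image (s := Finset.Icc z w) (g := sSeat η k) (f := f) hinj).symm.trans
      (Finset.sum_subset ?_ ?_)
    · intro y hy
      simp only [Finset.mem_image, Finset.mem_Icc] at hy ⊢
      obtain ⟨j, ⟨hzj, hjw⟩, rfl⟩ := hy
      exact ⟨hmono.monotone hzj, hmono.monotone hjw⟩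
    · intro y hy hnot
      simp only [Finset.mem_image, Finset.mem_Icc] at hy hnot
      exact hf y (event_of_not_image hη hfin hy.1 hy.2
        (fun j h1 h2 hne => hnot ⟨j, ⟨h1, h2⟩, hne.symm⟩))
  have zmain : ∀ f : ℕ → ℤ, (∀ y, Tev η k y = 1 → f y = 0) →
      ∑ y ∈ Finset.Icc (sSeat η k z + 1) (sSeat η k (z + 1) - 1), f y = 0 := by
    intro f hf
    apply Finset.sum_eq_zero
    intro y hy
    rw [Finset.mem_Icc] at hy
    have hs : sSeat η k z < sSeat η k (z + 1) := hmono (by omega)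
    have hxi : xiSeat η k y < ((z + 1 : ℕ) : ℤ) :=
      (xi_lt_or_s_le hη (z + 1) y).resolve_right (by omega)
    have hz1 : (z : ℤ) ≤ xiSeat η k (y - 1) := by
      have := xi_mono hη k (show sSeat η k z ≤ y - 1 by omega)
      rwa [xi_sSeat hfin] at this
    have hy0 : 1 ≤ y := by omega
    have h2 : xiSeat η k (y - 1) ≤ xiSeat η k y := xi_mono hη k (by omega)
    have hstep := xi_succ (η := η) k (y - 1)
    rw [Nat.sub_add_cancel hy0] at hstep
    apply hf
    push_cast at hxi
    omega
  exact ⟨main _ (fun y hT => (key hη hℓ hT).1), main _ (fun y hT => (key hη hℓ hT).2),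
    zmain _ (fun y hT => (key hη hℓ hT).1), zmain _ (fun y hT => (key hη hℓ hT).2)⟩
end

section
/- On finite configurations, the 1-skip map coincides with the 10-elimination: for every η ∈ {0,1}^ℕ with finitely many 1s, Φ_1(η) = Ψ_1(η), and for every i ∈ ℤ_{≥0}, |J^{10}_1(η,i)| = ζ_1(η,i). -/
/-- A position survives the simultaneous elimination of all '10' patterns iff it is
neither the '1' of a '10' pair nor the '0' of a '10' pair (with the convention
η(-1) = η(0) = 0, truncated subtraction handles x = 0). -/
def survives10 (η : ℕ → ℤ) (x : ℕ) : Prop :=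
  ¬(η x = 1 ∧ η (x + 1) = 0) ∧ ¬(η (x - 1) = 1 ∧ η x = 0)

/-- The 10-elimination Φ₁: the i-th symbol of Φ₁(η) is the symbol of η at the
i-th surviving position. -/
noncomputable def phi1 (η : ℕ → ℤ) : ℕ → ℤ := fun i => η (Nat.nth (survives10 η) i)

/-- Number of removed 10-pairs between the i-th and (i+1)-th surviving positions. -/
noncomputable def removedPairs (η : ℕ → ℤ) (i : ℕ) : ℕ :=
  (Nat.nth (survives10 η) (i + 1) - Nat.nth (survives10 η) i - 1) / 2

/-- Cardinality |J^{10}_1(η,i)| of the 10-rigging attached at position i of Φ₁(η):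
with X = η at the i-th surviving position and Y = η at the (i+1)-th, it is the number m
of removed pairs between them if XY ∈ {11,01,00}, and m − 1 if XY = 10. -/
noncomputable def J10card (η : ℕ → ℤ) (i : ℕ) : ℤ :=
  if η (Nat.nth (survives10 η) i) = 1 ∧ η (Nat.nth (survives10 η) (i + 1)) = 0 then
    (removedPairs η i : ℤ) - 1
  else (removedPairs η i : ℤ)


/-! ### Auxiliary machinery for the proof -/

private def bbsG (η : ℕ → ℤ) : ℕ → ℤ
  | 0 => 0
  | x + 1 => if η (x + 1) = η x then η (x + 1) else bbsG η x

private def Qp (η : ℕ → ℤ) (y : ℕ) : Prop := η y = η (y - 1)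

private instance (η : ℕ → ℤ) : DecidablePred (Qp η) := fun _ => by unfold Qp; infer_instance

private def fSh (η : ℕ → ℤ) (x : ℕ) : ℕ := x + (η x).toNat

section
variable {η : ℕ → ℤ}

private lemma W1_eq (hbin : ∀ x, η x = 0 ∨ η x = 1) (hη0 : η 0 = 0) :
    ∀ x, seatW η x 1 = η x := by
  intro x
  induction x with
  | zero => simp [seatW, hη0]
  | succ n ih =>
      rcases hbin (n + 1) with h | h <;> simp [seatW, h, ih, Finset.Ico_self]

private lemma W2_eq (hbin : ∀ x, η x = 0 ∨ η x = 1) (hη0 : η 0 = 0) :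
    ∀ x, seatW η x 2 = bbsG η x := by
  intro x
  induction x with
  | zero => simp [seatW, bbsG]
  | succ n ih =>
      have hIco : Finset.Ico 1 2 = {1} := rfl
      have h1 := W1_eq hbin hη0 n
      rcases hbin (n + 1) with h | h <;> rcases hbin n with h' | h' <;>
        simp [seatW, bbsG, hIco, h, h', ih, h1]

private lemma up1_eq (hbin : ∀ x, η x = 0 ∨ η x = 1) (hη0 : η 0 = 0) (y : ℕ) :
    seatUp η 1 y = η y * (1 - η (y - 1)) := by
  simp [seatUp, W1_eq hbin hη0, Finset.Ico_self]

private lemma dn1_eq (hbin : ∀ x, η x = 0 ∨ η x = 1) (hη0 : η 0 = 0) (y : ℕ) :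
    seatDown η 1 y = (1 - η y) * η (y - 1) := by
  simp [seatDown, W1_eq hbin hη0, Finset.Ico_self]

private lemma up2_eq (hbin : ∀ x, η x = 0 ∨ η x = 1) (hη0 : η 0 = 0) (y : ℕ) :
    seatUp η 2 y = η y * (1 - bbsG η (y - 1)) * η (y - 1) := by
  have hIco : Finset.Ico 1 2 = {1} := rfl
  simp [seatUp, W2_eq hbin hη0, hIco, W1_eq hbin hη0]

private lemma hud (hbin : ∀ x, η x = 0 ∨ η x = 1) (hη0 : η 0 = 0) (y : ℕ) :
    seatUp η 1 y + seatDown η 1 y = 1 - (if Qp η y then (1:ℤ) else 0) := by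
  rw [up1_eq hbin hη0, dn1_eq hbin hη0]
  unfold Qp
  rcases hbin y with h | h <;> rcases hbin (y - 1) with h' | h' <;> simp [h, h']

private lemma hdead (x : ℕ) (hx : ¬ survives10 η x) :
    (η x = 1 ∧ η (x + 1) = 0) ∨ (η (x - 1) = 1 ∧ η x = 0) := by
  unfold survives10 at hx; tauto

private lemma htn (hbin : ∀ x, η x = 0 ∨ η x = 1) (x : ℕ) :
    ((η x).toNat = 0 ∧ η x = 0) ∨ ((η x).toNat = 1 ∧ η x = 1) := by
  rcases hbin x with h | h <;> simp [h]

private lemma hval (hbin : ∀ x, η x = 0 ∨ η x = 1) (x : ℕ) (hx : survives10 η x) :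
    η (fSh η x) = η x := by
  rcases htn hbin x with ⟨h0, h1⟩ | ⟨h0, h1⟩
  · simp [fSh, h0]
  · have : η (x + 1) ≠ 0 := fun hc => hx.1 ⟨h1, hc⟩
    rcases hbin (x + 1) with h | h
    · exact absurd h this
    · simp [fSh, h0, h, h1]

private lemma hstep (hbin : ∀ x, η x = 0 ∨ η x = 1)
    (p q : ℕ) (hPp : survives10 η p) (hPq : survives10 η q) (hpq : p < q)
    (hmidl : ∀ x, p < x → x < q → ¬ survives10 η x) :
    fSh η p < fSh η q ∧ (∀ y, fSh η p < y → y < fSh η q → ¬ (η y = η (y - 1)))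
      ∧ (η (fSh η q) = η (fSh η q - 1)) ∧ (q - p - 1) % 2 = 0 := by
  have hstr : ∀ j, p + 1 + j < q → η (p + 1 + j) = if j % 2 = 0 then 1 else 0 := by
    intro j
    induction j with
    | zero =>
        intro hj
        rcases hdead (p + 1) (hmidl _ (by omega) hj) with ⟨h1, h2⟩ | ⟨h1, h2⟩
        · simpa using h1
        · exact absurd ⟨by simpa using h1, h2⟩ hPp.1
    | succ j ihj =>
        intro hj
        have hprev : η (p + 1 + j) = if j % 2 = 0 then 1 else 0 := ihj (by omega)
        by_cases hpar : j % 2 = 0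
        · rw [if_pos hpar] at hprev
          rcases hdead (p + 1 + j) (hmidl _ (by omega) (by omega)) with ⟨h1, h2⟩ | ⟨h1, h2⟩
          · rw [if_neg (by omega), show p + 1 + (j + 1) = (p + 1 + j) + 1 from by omega]
            exact h2
          · rw [hprev] at h2; norm_num at h2
        · rw [if_neg hpar] at hprev
          rcases hdead (p + 1 + (j + 1)) (hmidl _ (by omega) hj) with ⟨h1, h2⟩ | ⟨h1, h2⟩
          · rw [if_pos (by omega)]; exact h1
          · rw [show p + 1 + (j + 1) - 1 = p + 1 + j from by omega, hprev] at h1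
            norm_num at h1
  have hG3 : p + 2 ≤ q → η (q - 1) = 0 := by
    intro h2
    rcases hbin (q - 1) with h | h
    · exact h
    · exfalso
      rcases hdead (q - 1) (hmidl _ (by omega) (by omega)) with ⟨h1', h2'⟩ | ⟨h1', h2'⟩
      · exact hPq.2 ⟨h, by rwa [show q - 1 + 1 = q from by omega] at h2'⟩
      · rw [h] at h2'; norm_num at h2'
  have heven : (q - p - 1) % 2 = 0 := by
    by_cases hD : q - p - 1 = 0
    · omega
    · have hx := hstr (q - p - 1 - 1) (by omega)
      rw [show p + 1 + (q - p - 1 - 1) = q - 1 from by omega, hG3 (by omega)] at hx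
      by_cases hp2 : (q - p - 1 - 1) % 2 = 0
      · rw [if_pos hp2] at hx; norm_num at hx
      · omega
  have hflt : fSh η p < fSh η q := by
    rcases htn hbin p with ⟨hp0, ha⟩ | ⟨hp1, ha⟩
    · rcases htn hbin q with ⟨hq0, hb⟩ | ⟨hq1, hb⟩
      · simp only [fSh, hp0, hq0]; omega
      · simp only [fSh, hp0, hq1]; omega
    · by_cases hq' : q = p + 1
      · have hb : η q = 1 := by
          rw [hq']
          have := hval hbin p hPp
          simp only [fSh, hp1] at this; rw [this, ha]
        rcases htn hbin q with ⟨_, hb0⟩ | ⟨hq1, _⟩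
        · rw [hb] at hb0; norm_num at hb0
        · simp only [fSh, hp1, hq1]; omega
      · rcases htn hbin q with ⟨hq0, _⟩ | ⟨hq1, _⟩
        · simp only [fSh, hp1, hq0]; omega
        · simp only [fSh, hp1, hq1]; omega
  have hgap : ∀ y, fSh η p < y → y < fSh η q → ¬ (η y = η (y - 1)) := by
    intro y hy1 hy2 hQy
    have hyq : y ≤ q := by
      rcases htn hbin q with ⟨h, _⟩ | ⟨h, _⟩ <;> simp only [fSh, h] at hy2 <;> omega
    have hyp : p < y := by
      rcases htn hbin p with ⟨h, _⟩ | ⟨h, _⟩ <;> simp only [fSh, h] at hy1 <;> omega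
    rcases Nat.lt_or_ge y q with hylt | hyge
    · rcases Nat.lt_or_ge p (y - 1) with h1 | h1
      · have hj2 : y = p + 1 + (y - p - 1) := by omega
        have hj1 : y - 1 = p + 1 + (y - p - 2) := by omega
        have hv2 := hstr (y - p - 1) (by omega)
        have hv1 := hstr (y - p - 2) (by omega)
        rw [← hj2] at hv2; rw [← hj1] at hv1
        rw [hv1, hv2] at hQy
        by_cases hp2 : (y - p - 1) % 2 = 0
        · rw [if_pos hp2, if_neg (by omega)] at hQy; norm_num at hQy
        · rw [if_neg hp2, if_pos (by omega)] at hQy; norm_num at hQy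
      · have hyp1 : y = p + 1 := by omega
        have hap : η p = 0 := by
          rcases htn hbin p with ⟨_, h⟩ | ⟨h, _⟩
          · exact h
          · simp only [fSh, h] at hy1; omega
        have hv := hstr 0 (by omega)
        rw [show p + 1 + 0 = y from by omega] at hv
        simp only [Nat.zero_mod, if_pos rfl] at hv
        rw [hv, show y - 1 = p from by omega, hap] at hQy
        norm_num at hQy
    · have hyq' : y = q := by omega
      have hbq : η q = 1 := by
        rcases htn hbin q with ⟨h, _⟩ | ⟨_, h⟩
        · simp only [fSh, h] at hy2; omega
        · exact h
      by_cases hq' : q = p + 1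
      · have hap : η p = 0 := by
          rcases htn hbin p with ⟨_, h⟩ | ⟨h, _⟩
          · exact h
          · simp only [fSh, h] at hy1; omega
        rw [hyq', show q - 1 = p from by omega, hbq, hap] at hQy
        norm_num at hQy
      · rw [hyq', hbq, hG3 (by omega)] at hQy
        norm_num at hQy
  have hQfq : η (fSh η q) = η (fSh η q - 1) := by
    rcases htn hbin q with ⟨hq0, hb⟩ | ⟨hq1, hb⟩
    · have hfq : fSh η q = q := by simp [fSh, hq0]
      rw [hfq]
      by_cases hq' : q = p + 1
      · have hp0 : η p = 0 := by
          rcases hbin p with h | h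
          · exact h
          · exact absurd ⟨h, by rw [← hq']; exact hb⟩ hPp.1
        rw [show q - 1 = p from by omega, hb, hp0]
      · rw [hb, hG3 (by omega)]
    · have hfq : fSh η q = q + 1 := by simp [fSh, hq1]
      have hq1v : η (q + 1) = 1 := by
        have := hval hbin q hPq
        rwa [hfq, hb] at this
      rw [hfq, show q + 1 - 1 = q from by omega, hq1v, hb]
  exact ⟨hflt, hgap, hQfq, heven⟩

private lemma hxi (hbin : ∀ x, η x = 0 ∨ η x = 1) (hη0 : η 0 = 0) :
    ∀ x : ℕ, xiSeat η 1 x = (Nat.count (Qp η) (x + 1) : ℤ) - 1 := by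
  intro x
  induction x with
  | zero =>
      have h0 : Qp η 0 := rfl
      simp [xiSeat, Nat.count_succ, h0]
  | succ x ih =>
      have hph : xiSeat η 1 (x + 1)
          = xiSeat η 1 x + 1 - (seatUp η 1 (x + 1) + seatDown η 1 (x + 1)) := by
        unfold xiSeat
        rw [Finset.sum_Icc_succ_top (show 1 ≤ x + 1 by omega)]
        simp only [Finset.Icc_self, Finset.sum_singleton]
        push_cast; ring
      rw [hph, ih, hud hbin hη0,
        show Nat.count (Qp η) (x + 1 + 1)
            = Nat.count (Qp η) (x + 1) + if Qp η (x + 1) then 1 else 0 from Nat.count_succ _ _]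
      by_cases h : Qp η (x + 1)
      · rw [if_pos h, if_pos h]; push_cast; ring
      · rw [if_neg h, if_neg h]; push_cast; ring

private lemma hsSeat (hbin : ∀ x, η x = 0 ∨ η x = 1) (hη0 : η 0 = 0)
    (hQinf : (setOf (Qp η)).Infinite) (i : ℕ) :
    sSeat η 1 i = Nat.nth (Qp η) i := by
  unfold sSeat
  apply le_antisymm
  · apply Nat.sInf_le
    show xiSeat η 1 (Nat.nth (Qp η) i) = (i : ℤ)
    rw [hxi hbin hη0, Nat.count_succ, Nat.count_nth_of_infinite hQinf i,
      if_pos (Nat.nth_mem_of_infinite hQinf i)]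
    push_cast; ring
  · apply le_csInf
    · refine ⟨Nat.nth (Qp η) i, ?_⟩
      show xiSeat η 1 (Nat.nth (Qp η) i) = (i : ℤ)
      rw [hxi hbin hη0, Nat.count_succ, Nat.count_nth_of_infinite hQinf i,
        if_pos (Nat.nth_mem_of_infinite hQinf i)]
      push_cast; ring
    · intro x hx
      by_contra hcon
      push_neg at hcon
      have hmono : Nat.count (Qp η) (x + 1) ≤ i := by
        have := Nat.count_monotone (Qp η) (show x + 1 ≤ Nat.nth (Qp η) i by omega)
        rwa [Nat.count_nth_of_infinite hQinf i] at this
      have hx' : xiSeat η 1 x = (i : ℤ) := hx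
      rw [hxi hbin hη0] at hx'
      omega

end

/-- on finite configurations the 1-skip map coincides with the
10-elimination, and the 10-rigging cardinalities coincide with ζ₁. -/
theorem phi1_eq_skip_one (η : ℕ → ℤ) (hη : ∀ x, η x = 0 ∨ η x = 1)
    (hη0 : η 0 = 0) (hfin : (Function.support η).Finite) :
    phi1 η = skip η 1 ∧ ∀ i : ℕ, J10card η i = zeta η 1 i := by
  classical
  obtain ⟨N, hN⟩ : ∃ N : ℕ, ∀ x, N ≤ x → η x = 0 := by
    obtain ⟨N, hNb⟩ := hfin.bddAbove
    refine ⟨N + 1, fun x hx => ?_⟩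
    by_contra h
    have := hNb (Function.mem_support.mpr h)
    omega
  have hPinf : (setOf (survives10 η)).Infinite := by
    refine Set.Infinite.mono ?_ (Set.Ici_infinite (N + 1))
    intro x hx
    have hxx : N + 1 ≤ x := Set.mem_Ici.mp hx
    have hx1 : η x = 0 := hN x (by omega)
    refine ⟨fun h => by rw [hx1] at h; exact absurd h.1 (by norm_num), fun h => ?_⟩
    have hx2 : η (x - 1) = 0 := hN (x - 1) (by omega)
    rw [hx2] at h; exact absurd h.1 (by norm_num)
  have hQinf : (setOf (Qp η)).Infinite := by
    refine Set.Infinite.mono ?_ (Set.Ici_infinite (N + 1))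
    intro x hx
    have hxx : N + 1 ≤ x := Set.mem_Ici.mp hx
    show η x = η (x - 1)
    rw [hN x (by omega), hN (x - 1) (by omega)]
  have hP0 : survives10 η 0 := by
    constructor
    · intro h; rw [hη0] at h; exact absurd h.1 (by norm_num)
    · intro h
      have : η 0 = 1 := h.1
      rw [hη0] at this; exact absurd this (by norm_num)
  have hQ0 : Qp η 0 := rfl
  have hmid : ∀ i x, Nat.nth (survives10 η) i < x → x < Nat.nth (survives10 η) (i + 1) →
      ¬ survives10 η x := by
    intro i x h1 h2 hx
    have hc1 : i < Nat.count (survives10 η) x := (Nat.lt_nth_iff_count_lt hPinf).2 h1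
    have hc2 : Nat.count (survives10 η) (x + 1) = Nat.count (survives10 η) x + 1 := by
      rw [Nat.count_succ, if_pos hx]
    have hc3 : ¬ (i + 1 < Nat.count (survives10 η) (x + 1)) := by
      intro hc
      have := (Nat.lt_nth_iff_count_lt hPinf).1 hc
      omega
    omega
  have hkey : ∀ i, Nat.nth (Qp η) i = fSh η (Nat.nth (survives10 η) i) := by
    intro i
    induction i with
    | zero =>
        rw [Nat.nth_zero_of_zero hQ0, Nat.nth_zero_of_zero hP0]
        simp [fSh, hη0]
    | succ i ih =>
        have hPp : survives10 η (Nat.nth (survives10 η) i) := Nat.nth_mem_of_infinite hPinf i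
        have hPq : survives10 η (Nat.nth (survives10 η) (i + 1)) :=
          Nat.nth_mem_of_infinite hPinf (i + 1)
        have hpq : Nat.nth (survives10 η) i < Nat.nth (survives10 η) (i + 1) :=
          (Nat.nth_lt_nth hPinf).2 (by omega)
        obtain ⟨hflt, hgap, hQfq, -⟩ := hstep hη _ _ hPp hPq hpq (hmid i)
        set u := fSh η (Nat.nth (survives10 η) i) with hudef
        set v := fSh η (Nat.nth (survives10 η) (i + 1)) with hvdef
        have hQfp : Qp η u := by rw [← ih]; exact Nat.nth_mem_of_infinite hQinf i
        have h1 : Nat.count (Qp η) (u + 1) = i + 1 := by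
          rw [Nat.count_succ, if_pos hQfp, ← ih, Nat.count_nth_of_infinite hQinf i]
        have h2 : ∀ d, u + 1 + d ≤ v → Nat.count (Qp η) (u + 1 + d) = i + 1 := by
          intro d
          induction d with
          | zero => intro _; simpa using h1
          | succ d ihd =>
              intro hd
              rw [show u + 1 + (d + 1) = (u + 1 + d) + 1 from by omega,
                Nat.count_succ, ihd (by omega),
                if_neg (show ¬ Qp η (u + 1 + d) from hgap _ (by omega) (by omega))]
        have h3 : Nat.count (Qp η) v = i + 1 := by
          have := h2 (v - (u + 1)) (by omega)
          rwa [show u + 1 + (v - (u + 1)) = v from by omega] at this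
        have h4 := Nat.nth_count (p := Qp η) (show Qp η v from hQfq)
        rw [h3] at h4
        exact h4
  constructor
  · funext x
    show η (Nat.nth (survives10 η) x) = η (sSeat η 1 x)
    rw [hsSeat hη hη0 hQinf, hkey,
      hval hη (Nat.nth (survives10 η) x) (Nat.nth_mem_of_infinite hPinf x)]
  · intro i
    set p := Nat.nth (survives10 η) i with hpdef
    set q := Nat.nth (survives10 η) (i + 1) with hqdef
    have hPp : survives10 η p := Nat.nth_mem_of_infinite hPinf i
    have hPq : survives10 η q := Nat.nth_mem_of_infinite hPinf (i + 1)
    have hpq : p < q := (Nat.nth_lt_nth hPinf).2 (by omega)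
    obtain ⟨hflt, hgap, hQfq, heven⟩ := hstep hη _ _ hPp hPq hpq (hmid i)
    set u := fSh η p with hudef
    set v := fSh η q with hvdef
    have hu : sSeat η 1 i = u := by
      rw [hsSeat hη hη0 hQinf, hkey, hudef, hpdef]
    have hv : sSeat η 1 (i + 1) = v := by
      rw [hsSeat hη hη0 hQinf, hkey, hvdef, hqdef]
    have hQu : Qp η u := by
      rw [hudef, hpdef, ← hkey]; exact Nat.nth_mem_of_infinite hQinf i
    have hgu : bbsG η u = η u := by
      rcases Nat.eq_zero_or_pos u with h0 | hpos
    
      · rw [h0]; rw [show η 0 = 0 from hη0]; rfl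
      · obtain ⟨w, hw⟩ : ∃ w, u = w + 1 := ⟨u - 1, by omega⟩
        have hQu' : Qp η (w + 1) := by rw [← hw]; exact hQu
        rw [hw]
        show bbsG η (w + 1) = η (w + 1)
        simp only [bbsG]
        rw [if_pos (show η (w + 1) = η w from hQu')]
    have hgconst : ∀ d, u + d ≤ v - 1 → bbsG η (u + d) = η u := by
      intro d
      induction d with
      | zero => intro _; simpa using hgu
      | succ d ihd =>
          intro hd
          have hng : ¬ (η (u + d + 1) = η (u + d)) := by
            have := hgap (u + d + 1) (by omega) (by omega)
            simpa using this
          rw [show u + (d + 1) = (u + d) + 1 from by omega]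
          show bbsG η ((u + d) + 1) = η u
          simp only [bbsG]
          rw [if_neg hng]
          exact ihd (by omega)
    have hgv1 : bbsG η (v - 1) = η u := by
      have := hgconst (v - 1 - u) (by omega)
      rwa [show u + (v - 1 - u) = v - 1 from by omega] at this
    have ha : η u = η p := hval hη p hPp
    have hb : η v = η q := hval hη q hPq
    have hb' : η (v - 1) = η q := by rw [← hQfq]; exact hb
    have hsingle : ∀ F : ℕ → ℤ, (∀ y, u < y → y < v → F y = 0) →
        ∑ y ∈ Finset.Ioc u v, F y = F v := by
      intro F hF
      have hv1 : v = (v - 1) + 1 := by omega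
      have hzero : ∑ y ∈ Finset.Ioc u (v - 1), F y = 0 :=
        Finset.sum_eq_zero (fun y hy => by
          rw [Finset.mem_Ioc] at hy; exact hF y hy.1 (by omega))
      calc ∑ y ∈ Finset.Ioc u v, F y
          = ∑ y ∈ Finset.Ioc u ((v - 1) + 1), F y := by rw [← hv1]
        _ = ∑ y ∈ Finset.Ioc u (v - 1), F y + F ((v - 1) + 1) :=
            Finset.sum_Ioc_succ_top (by omega) _
        _ = F v := by rw [hzero, zero_add, ← hv1]
    have hchi := hsingle (fun y => if Qp η y then (1:ℤ) else 0)
      (fun y h1 h2 => if_neg (hgap y h1 h2))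
    simp only [if_pos (show Qp η v from hQfq)] at hchi
    have hup2sum := hsingle (seatUp η 2) (by
      intro y h1 h2
      show seatUp η 2 y = 0
      rw [up2_eq hη hη0]
      rcases hη y with h | h
      · rw [h]; ring
      · rcases hη (y - 1) with h' | h'
        · rw [h']; ring
        · exact absurd (h.trans h'.symm) (hgap y h1 h2))
    rw [up2_eq hη hη0 v, hgv1, ha, hb, hb'] at hup2sum
    have htel : ∀ w, u ≤ w → ∑ y ∈ Finset.Ioc u w, (η y - η (y - 1)) = η w - η u := by
      intro w hw
      induction w, hw using Nat.le_induction with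
      | base => simp
      | succ w hw ihw =>
          rw [Finset.sum_Ioc_succ_top hw, ihw]
          simp only [Nat.add_sub_cancel]
          ring
    have hsumB : ∑ y ∈ Finset.Ioc u v, (seatUp η 1 y - seatDown η 1 y) = η q - η p := by
      have hpt : ∀ y ∈ Finset.Ioc u v,
          seatUp η 1 y - seatDown η 1 y = η y - η (y - 1) := by
        intro y _
        rw [up1_eq hη hη0, dn1_eq hη hη0]; ring
      rw [Finset.sum_congr rfl hpt, htel v (by omega), hb, ha]
    have hsumA : ∑ y ∈ Finset.Ioc u v, (seatUp η 1 y + seatDown η 1 y)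
        = ((v : ℤ) - u) - 1 := by
      have hpt : ∀ y ∈ Finset.Ioc u v, seatUp η 1 y + seatDown η 1 y
          = 1 - (if Qp η y then (1:ℤ) else 0) := fun y _ => hud hη hη0 y
      rw [Finset.sum_congr rfl hpt, Finset.sum_sub_distrib, hchi, Finset.sum_const,
        Nat.card_Ioc, nsmul_eq_mul, mul_one]
      have hc : ((v - u : ℕ) : ℤ) = (v : ℤ) - u := by omega
      rw [hc]
    have h2S : 2 * zeta η 1 i
        = (((v : ℤ) - u) - 1) + (η q - η p) - 2 * (η q * (1 - η p) * η q) := by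
      unfold zeta
      rw [hu, hv, Finset.Icc_add_one_left_eq_Ioc, Finset.mul_sum]
      have hpt : ∀ y ∈ Finset.Ioc u v, 2 * (seatUp η 1 y - seatUp η (1 + 1) y)
          = ((seatUp η 1 y + seatDown η 1 y) + (seatUp η 1 y - seatDown η 1 y))
            - 2 * seatUp η 2 y := by
        intro y _
        show 2 * (seatUp η 1 y - seatUp η 2 y) = _
        ring
      rw [Finset.sum_congr rfl hpt, Finset.sum_sub_distrib, Finset.sum_add_distrib,
        hsumA, hsumB, ← Finset.mul_sum, hup2sum]
    unfold J10card removedPairs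
    rw [← hpdef, ← hqdef]
    have hD2 : 2 * ((q - p - 1) / 2) = q - p - 1 := by omega
    apply mul_left_cancel₀ (show (2:ℤ) ≠ 0 from two_ne_zero)
    rw [h2S]
    rcases hη p with hap | hap <;> rcases hη q with hbq | hbq
    · rw [if_neg (fun hc => by rw [hap] at hc; exact absurd hc.1 (by norm_num))]
      have hu0 : u = p := by rw [hudef]; simp [fSh, hap]
      have hv0 : v = q := by rw [hvdef]; simp [fSh, hbq]
      rw [hap, hbq, hu0, hv0]
      push_cast
      omega
    · rw [if_neg (fun hc => by rw [hap] at hc; exact absurd hc.1 (by norm_num))]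
      have hu0 : u = p := by rw [hudef]; simp [fSh, hap]
      have hv0 : v = q + 1 := by rw [hvdef]; simp [fSh, hbq]
      rw [hap, hbq, hu0, hv0]
      push_cast
      omega
    · rw [if_pos ⟨hap, hbq⟩]
      have hu0 : u = p + 1 := by rw [hudef]; simp [fSh, hap]
      have hv0 : v = q := by rw [hvdef]; simp [fSh, hbq]
      rw [hap, hbq, hu0, hv0]
      push_cast
      omega
    · rw [if_neg (fun hc => by rw [hbq] at hc; exact absurd hc.2 (by norm_num))]
      have hu0 : u = p + 1 := by rw [hudef]; simp [fSh, hap]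
      have hv0 : v = q + 1 := by rw [hvdef]; simp [fSh, hbq]
      rw [hap, hbq, hu0, hv0]
      push_cast
      omega
end

section
/- Writing η ∈ Ω_{<∞} in run-length form η = 0^{m_0} 1^{n_1} 0^{m_1} ⋯ 0^{m_{l-1}} 1^{n_l} 0^{∞} with n_1,…,n_l ≥ 1 and m_1,…,m_{l-1} ≥ 1, the 10-elimination removes exactly one symbol from each interior run: Φ_1(η) = 0^{m_0} 1^{n_1−1} 0^{m_1−1} ⋯ 0^{m_{l-1}−1} 1^{n_l−1} 0^{∞}. -/
/-- The finite word 0^{m₀} 1^{n 0} 0^{m 0} 1^{n 1} 0^{m 1} ⋯ 1^{n (l-1)};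
the trailing infinite run of 0s is obtained by the default value in getD. -/
def runWord (m0 l : ℕ) (n m : ℕ → ℕ) : List ℤ :=
  List.replicate m0 0 ++
    ((List.range (l - 1)).flatMap fun i => List.replicate (n i) 1 ++ List.replicate (m i) 0)
      ++ List.replicate (n (l - 1)) 1

/-! The 10-elimination deletes exactly the positions that belong to a `10` pair. In a word
`0^a 1^b 0 w` with `b ≥ 1` the only such pair before `w` sits at positions `a + b - 1, a + b`;
all earlier positions survive, and since the cut after a `0` splits no pair, survival inside
`w` is the same as in `w` alone. Counting survivors then locates the `j`-th one, giving
`Φ₁(0^a 1^b 0 w) = 0^a 1^(b-1) Φ₁(w)`, and the theorem follows by induction on the number of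
runs of `1`s. -/

theorem Nat.nth_eq_ite_of_prefix_of_gap (p : ℕ → Prop) {k d : ℕ} (hpre : ∀ x < k, p x)
    (hgap : ∀ x, k ≤ x → x < k + d → ¬ p x) (hinf : {y | p (k + d + y)}.Infinite) (j : ℕ) :
    Nat.nth p j = if j < k then j else k + d + Nat.nth (fun y => p (k + d + y)) (j - k) := by
  classical
  split_ifs with hj
  · have hcount : Nat.count p j = j := Nat.count_of_forall fun x hx => hpre x (hx.trans hj)
    simpa [hcount] using Nat.nth_count (hpre j hj)
  · have hy := Nat.nth_mem_of_infinite hinf (j - k)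
    have hcount : Nat.count p (k + d + Nat.nth (fun y => p (k + d + y)) (j - k)) = j := by
      rw [Nat.count_add, Nat.count_add, Nat.count_of_forall hpre,
        Nat.count_of_forall_not fun x hx => hgap _ (by omega) (by omega),
        Nat.count_nth_of_infinite hinf]
      omega
    simpa only [hcount] using Nat.nth_count hy

theorem survives10_add_iff (η : ℕ → ℤ) (N y : ℕ) (hcut : ¬(η (N - 1) = 1 ∧ η N = 0)) :
    survives10 η (N + y) ↔ survives10 (fun z => η (N + z)) y := by
  rcases y with _ | y
  · grind [survives10]
  · simp only [survives10, Nat.add_sub_cancel, ← Nat.add_assoc]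

theorem phi1_eq_ite_of_prefix_of_gap (η : ℕ → ℤ) {k d : ℕ} (hpre : ∀ x < k, survives10 η x)
    (hgap : ∀ x, k ≤ x → x < k + d → ¬ survives10 η x)
    (hcut : ¬(η (k + d - 1) = 1 ∧ η (k + d) = 0))
    (hinf : {y | survives10 (fun z => η (k + d + z)) y}.Infinite) (j : ℕ) :
    phi1 η j = if j < k then η j else phi1 (fun y => η (k + d + y)) (j - k) := by
  have hshift : (fun y => survives10 η (k + d + y)) = survives10 (fun z => η (k + d + z)) :=
    funext fun y => propext (survives10_add_iff η _ y hcut)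
  unfold phi1
  rw [Nat.nth_eq_ite_of_prefix_of_gap _ hpre hgap (hshift ▸ hinf), hshift]
  split_ifs <;> rfl

theorem survives10_getD_infinite (w : List ℤ) :
    {x | survives10 (fun x => w.getD x 0) x}.Infinite := by
  refine Set.infinite_of_forall_exists_gt fun a => ⟨a + w.length + 1, ?_, by omega⟩
  have hzero : ∀ x, w.length ≤ x → w.getD x 0 = 0 := fun x hx => List.getD_eq_default _ _ hx
  simp only [Set.mem_ofPred_eq, survives10, hzero (a + w.length + 1) (by omega),
    hzero (a + w.length + 1 - 1) (by omega)]
  omega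

theorem phi1_getD_nil :
    phi1 (fun x => ([] : List ℤ).getD x 0) = fun x => ([] : List ℤ).getD x 0 := by
  funext j
  simp [phi1]

theorem phi1_getD_zero_cons {v v' : List ℤ}
    (h : phi1 (fun x => v.getD x 0) = fun x => v'.getD x 0) :
    phi1 (fun x => (0 :: v).getD x 0) = fun x => (0 :: v').getD x 0 := by
  have hshift : (fun y => (0 :: v).getD (1 + 0 + y) 0) = fun y => v.getD y 0 := by
    funext y
    simp [Nat.add_comm 1]
  funext j
  rw [phi1_eq_ite_of_prefix_of_gap (k := 1) (d := 0) _ (fun x hx => ?_) (fun x _ _ => by omega)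
    (by simp) (by rw [hshift]; exact survives10_getD_infinite v), hshift, h]
  · rcases j with _ | j <;> simp
  · obtain rfl : x = 0 := by omega
    simp [survives10]

theorem phi1_getD_replicate_zero_append (a : ℕ) {v v' : List ℤ}
    (h : phi1 (fun x => v.getD x 0) = fun x => v'.getD x 0) :
    phi1 (fun x => (List.replicate a 0 ++ v).getD x 0)
      = fun x => (List.replicate a 0 ++ v').getD x 0 := by
  induction a with
  | zero => simpa using h
  | succ a ih => simpa [List.replicate_succ] using phi1_getD_zero_cons ih

theorem phi1_getD_replicate_succ_one_append_zero_cons (c : ℕ) {v v' : List ℤ}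
    (h : phi1 (fun x => v.getD x 0) = fun x => v'.getD x 0) :
    phi1 (fun x => (List.replicate (c + 1) 1 ++ 0 :: v).getD x 0)
      = fun x => (List.replicate c 1 ++ v').getD x 0 := by
  set η : ℕ → ℤ := fun x => (List.replicate (c + 1) 1 ++ 0 :: v).getD x 0
  have hone : ∀ x < c + 1, η x = 1 := fun x hx => by
    simp only [η]
    rw [List.getD_append _ _ _ _ (by simpa using hx), List.getD_replicate _ hx]
  have hzero : η (c + 1) = 0 := by simp [η]
  have hshift : (fun y => η (c + 2 + y)) = fun y => v.getD y 0 := by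
    funext y
    simp only [η]
    rw [List.getD_append_right _ _ _ _ (by simp; omega), List.length_replicate,
      show c + 2 + y - (c + 1) = y + 1 by omega, List.getD_cons_succ]
  have hpre : ∀ x < c, survives10 η x := fun x hx => by
    simp [survives10, hone x (by omega), hone (x + 1) (by omega)]
  have hgap : ∀ x, c ≤ x → x < c + 2 → ¬ survives10 η x := fun x hx hx' => by
    obtain hxc | hxc : x = c ∨ x = c + 1 := by omega
    all_goals simp [hxc, survives10, hone c (by omega), hzero]
  have hcut : ¬(η (c + 2 - 1) = 1 ∧ η (c + 2) = 0) := by simp [hzero]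
  funext j
  rw [phi1_eq_ite_of_prefix_of_gap η hpre hgap hcut
    (by rw [hshift]; exact survives10_getD_infinite v), hshift, h]
  split_ifs with hj
  · rw [hone j (by omega), List.getD_append _ _ _ _ (by simpa using hj), List.getD_replicate _ hj]
  · rw [List.getD_append_right _ _ _ _ (by simpa using hj), List.length_replicate]

theorem List.getD_append_singleton_default {α : Type*} (w : List α) (d : α) (x : ℕ) :
    (w ++ [d]).getD x d = w.getD x d := by
  grind

theorem runWord_one (m0 : ℕ) (n m : ℕ → ℕ) :
    runWord m0 1 n m = List.replicate m0 0 ++ List.replicate (n 0) 1 := by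
  simp [runWord]

theorem runWord_succ (m0 : ℕ) {l : ℕ} (hl : 1 ≤ l) (n m : ℕ → ℕ) :
    runWord m0 (l + 1) n m = List.replicate m0 0 ++ (List.replicate (n 0) 1 ++
      (List.replicate (m 0) 0 ++ runWord 0 l (fun i => n (i + 1)) (fun i => m (i + 1)))) := by
  obtain ⟨k, rfl⟩ := Nat.exists_eq_add_of_le' hl
  simp [runWord, List.range_succ_eq_map, List.flatMap_map]

/-- the 10-elimination removes exactly one symbol from each interior run:
Φ₁(0^{m₀} 1^{n₁} 0^{m₁} ⋯ 0^{m_{l-1}} 1^{n_l} 0^∞)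
  = 0^{m₀} 1^{n₁−1} 0^{m₁−1} ⋯ 0^{m_{l-1}−1} 1^{n_l−1} 0^∞. -/
theorem phi1_run_length (m0 l : ℕ) (hl : 1 ≤ l) (n m : ℕ → ℕ)
    (hn : ∀ i < l, 1 ≤ n i) (hm : ∀ i < l - 1, 1 ≤ m i) :
    phi1 (fun x => (runWord m0 l n m).getD x 0)
      = fun x => (runWord m0 l (fun i => n i - 1) (fun i => m i - 1)).getD x 0 := by
  induction l, hl using Nat.le_induction generalizing m0 n m with
  | base =>
    obtain ⟨b, hb⟩ : ∃ b, n 0 = b + 1 := ⟨n 0 - 1, by have := hn 0 one_pos; omega⟩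
    have h := phi1_getD_replicate_zero_append m0
      (phi1_getD_replicate_succ_one_append_zero_cons b phi1_getD_nil)
    simp only [← List.append_assoc, List.getD_append_singleton_default, List.append_nil] at h
    rwa [runWord_one, runWord_one, hb]
  | succ l hl ih =>
    obtain ⟨b, hb⟩ : ∃ b, n 0 = b + 1 := ⟨n 0 - 1, by have := hn 0 (by omega); omega⟩
    obtain ⟨c, hc⟩ : ∃ c, m 0 = c + 1 := ⟨m 0 - 1, by have := hm 0 (by omega); omega⟩
    have htail := ih 0 (fun i => n (i + 1)) (fun i => m (i + 1))
      (fun i hi => hn (i + 1) (by omega)) (fun i hi => hm (i + 1) (by omega))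
    have h := phi1_getD_replicate_zero_append m0 (phi1_getD_replicate_succ_one_append_zero_cons b
      (phi1_getD_replicate_zero_append c htail))
    rw [runWord_succ _ hl, runWord_succ _ hl, hb, hc]
    simpa [List.replicate_succ] using h
end
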